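/- Correctness of the simplification procedure: for every list a of length L ≥ 1 with entries in {1,…,M}, every internal (non-leaf) node of the canonical decoded forest decode(s(a)) of the simplified list s(a) has at least two children. (Thus the simplification of Section 5.1 always produces an organization with no redundant single-subordinate aggregator nodes.) -/

import Mathlib

/-- A rooted plane tree: a node carrying a finite ordered list of child subtrees.
A node with no children is a leaf. -/
inductive PTree : Type where
  | node : List PTree → PTree

namespace PTree

mutual
/-- Number of leaves of a plane tree. -/
def leaves : PTree → ℕ
  | .node [] => 1
  | .node (c :: cs) => c.leaves + leavesList cs

/-- Total number of leaves of a list of plane trees. -/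
def leavesList : List PTree → ℕ
  | [] => 0
  | c :: cs => c.leaves + leavesList cs
end

mutual
/-- Height of a plane tree (a single leaf has height 1). -/
def height : PTree → ℕ
  | .node [] => 1
  | .node (c :: cs) => 1 + max c.height (heightList cs)

/-- Maximum height among a list of plane trees (0 for the empty list). -/
def heightList : List PTree → ℕ
  | [] => 0
  | c :: cs => max c.height (heightList cs)
end

mutual
/-- Separation levels between consecutive leaves inside a tree whose root is at level `l`:
between two consecutive leaves lying in distinct children we record `l+1`
(one more than the level of their lowest common ancestor, which is the root). -/
def enc : PTree → ℕ → List ℕ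
  | .node [], _ => []
  | .node (c :: cs), l => c.enc (l + 1) ++ encList cs (l + 1)

/-- Separation levels for a list of sibling subtrees all at level `l`, including
the separator `l` between consecutive subtrees. -/
def encList : List PTree → ℕ → List ℕ
  | [], _ => []
  | c :: cs, l => (l :: c.enc l) ++ encList cs l
end

end PTree

/-- Total number of leaves of a plane forest. -/
def forestLeaves (F : List PTree) : ℕ := PTree.leavesList F

/-- Height of a plane forest: the maximum level of any of its nodes (roots are at level 1). -/
def forestHeight (F : List PTree) : ℕ := PTree.heightList F

/-- The separation array of a plane forest: for each pair of consecutive leaves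
(numbered left to right), the level at which they separate (`1` if they lie in
different trees, and `1 +` the level of their lowest common ancestor otherwise). -/
def forestSep : List PTree → List ℕ
  | [] => []
  | t :: ts => t.enc 1 ++ PTree.encList ts 1

/-- Maximum entry of a list of naturals (`0` for the empty list). -/
def listMax (a : List ℕ) : ℕ := a.foldr max 0

/-- Split a list at the positions of entries equal to `v`, producing the list of the
(possibly empty) segments delimited by those entries; a list containing `k` occurrences
of `v` yields `k + 1` segments, in left-to-right order. -/
def splitSep (v : ℕ) : List ℕ → List (List ℕ)
  | [] => [[]]
  | x :: xs =>
    match splitSep v xs with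
    | [] => [[]]
    | r :: rs => if x = v then [] :: r :: rs else (x :: r) :: rs

theorem splitSep_ne_nil (v : ℕ) (s : List ℕ) : splitSep v s ≠ [] := by
  cases s with
  | nil => simp [splitSep]
  | cons x xs =>
    simp only [splitSep]
    cases h : splitSep v xs with
    | nil => simp
    | cons r rs => by_cases hxv : x = v <;> simp [hxv]

theorem listMax_le_of_mem_splitSep {v : ℕ} {s s' : List ℕ} (h : s' ∈ splitSep v s) :
    listMax s' ≤ listMax s := by
  induction s generalizing s' with
  | nil =>
    simp only [splitSep, List.mem_singleton] at h
    subst h; exact le_rfl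
  | cons x xs ih =>
    simp only [splitSep] at h
    cases hs : splitSep v xs with
    | nil => exact absurd hs (splitSep_ne_nil v xs)
    | cons r rs =>
      rw [hs] at h
      have hr : r ∈ splitSep v xs := by rw [hs]; exact List.mem_cons_self
      by_cases hxv : x = v
      · simp only [if_pos hxv, List.mem_cons] at h
        rcases h with h | h | h
        · subst h; simp [listMax]
        · subst h
          exact le_trans (ih hr) (by simp [listMax, le_max_iff, le_refl, or_true])
        · have : s' ∈ splitSep v xs := by rw [hs]; exact List.mem_cons_of_mem _ h
          exact le_trans (ih this) (by simp [listMax, le_max_iff, le_refl, or_true])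
      · simp only [if_neg hxv, List.mem_cons] at h
        rcases h with h | h
        · subst h
          have := ih hr
          simp only [listMax, List.foldr] at *
          omega
        · have : s' ∈ splitSep v xs := by rw [hs]; exact List.mem_cons_of_mem _ h
          have := ih this
          simp only [listMax, List.foldr] at *
          omega

/-- The canonical decoding `T(s, l)` of a list `s` (all of whose entries are intended to
be strictly greater than `l`) into a plane tree rooted at level `l`: the empty list
decodes to a single leaf, and otherwise the children are obtained by decoding, at level
`l + 1`, the segments of `s` delimited by the entries equal to `l + 1`. -/
def decodeT (s : List ℕ) (l : ℕ) : PTree :=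
  if h : s = [] ∨ listMax s ≤ l then .node []
  else .node ((splitSep (l + 1) s).attach.map (fun x => decodeT x.1 (l + 1)))
termination_by listMax s + 1 - l
decreasing_by
  have h1 : listMax x.1 ≤ listMax s := listMax_le_of_mem_splitSep x.2
  push_neg at h
  omega

/-- The canonical decoded forest of a list `a`: decode, as trees rooted at level `1`,
the segments of `a` delimited by the entries equal to `1`. -/
def decode (a : List ℕ) : List PTree := (splitSep 1 a).map (fun s => decodeT s 1)

mutual
/-- A plane tree is *simplified* if every internal (non-leaf) node has at least two
children. -/
def PTree.Simplified : PTree → Prop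
  | .node [] => True
  | .node (c :: cs) => cs ≠ [] ∧ c.Simplified ∧ SimplifiedList cs

/-- Every tree in the list is simplified. -/
def SimplifiedList : List PTree → Prop
  | [] => True
  | c :: cs => c.Simplified ∧ SimplifiedList cs
end

/-- A plane forest is *simplified* if every internal (non-leaf) node of every one of its
trees has at least two children. -/
def forestSimplified (F : List PTree) : Prop := SimplifiedList F

/-- Minimum entry of a nonempty list of naturals (`0` for the empty list). -/
def listMin : List ℕ → ℕ
  | [] => 0
  | x :: xs => xs.foldr min x

/-- One pass of the simplification procedure at level `l`: within every maximal nonempty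
block of consecutive entries that are all strictly greater than `l` (delimited by entries
`≤ l` or by the ends of the list), replace every entry equal to the minimum of that block
by `l + 1`. -/
def stepSimp (l : ℕ) : List ℕ → List ℕ
  | [] => []
  | x :: xs =>
    if x ≤ l then x :: stepSimp l xs
    else
      (((x :: xs).takeWhile (fun y => decide (l < y))).map
          (fun y =>
            if y = listMin ((x :: xs).takeWhile (fun y => decide (l < y))) then l + 1
            else y)) ++
        stepSimp l ((x :: xs).dropWhile (fun y => decide (l < y)))
termination_by a => a.length
decreasing_by
  · simp
  · have h1 : ((x :: xs).dropWhile (fun y => decide (l < y))).length ≤ xs.length := by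
      rw [List.dropWhile_cons]
      simp only [decide_eq_true_eq]
      split
      · exact (List.dropWhile_sublist _).length_le
      · omega
    simp only [List.length_cons]
    omega

/-- The simplification `s(a)` of a list `a` with entries in `{1,…,M}`: perform the
level-`l` simplification pass for `l = 1, 2, …, M - 1` in increasing order. -/
def simplify (M : ℕ) (a : List ℕ) : List ℕ :=
  (List.range (M - 1)).foldl (fun b l => stepSimp (l + 1) b) a

/-!
After the pass at level `l`, every maximal block of entries `> l` contains `l + 1`, and the
later passes, at levels `l' > l`, keep this: they leave entries `≤ l'` alone and only lower
entries `> l'` to `l' + 1 > l`, so blocks at level `l` keep their extent and their entry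
`l + 1`. In the decoding, an internal node at level `l` comes from a nonempty list of entries
`> l`, which is a single block at level `l`; hence it contains `l + 1`, and splitting at
`l + 1` yields at least two children, whose lists inherit the block property at the levels
above.
-/

namespace List

variable {α : Type*}

theorem mem_of_mem_splitOnP {p : α → Bool} {s b : List α} (hb : b ∈ s.splitOnP p) {x : α}
    (hx : x ∈ b) : x ∈ s ∧ p x = false := by
  induction s generalizing b with
  | nil => simp_all
  | cons y ys ih =>
    rw [splitOnP_cons_eq_if_modifyHead] at hb
    obtain ⟨r, rs, hr⟩ := exists_cons_of_ne_nil (splitOnP_ne_nil p ys)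
    split at hb
    · simp only [mem_cons] at hb
      rcases hb with rfl | hb
      · simp at hx
      · exact ⟨mem_cons_of_mem _ (ih hb hx).1, (ih hb hx).2⟩
    · simp only [hr, modifyHead_cons, mem_cons] at hb
      rcases hb with rfl | hb
      · rcases mem_cons.mp hx with rfl | hx
        · simp_all
        · have := ih (hr ▸ mem_cons_self) hx
          exact ⟨mem_cons_of_mem _ this.1, this.2⟩
      · have := ih (hr ▸ mem_cons_of_mem _ hb) hx
        exact ⟨mem_cons_of_mem _ this.1, this.2⟩

theorem flatMap_splitOnP_of_imp {p q : α → Bool} (hqp : ∀ x, q x → p x) (s : List α) :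
    (s.splitOnP q).flatMap (splitOnP p) = s.splitOnP p := by
  induction s with
  | nil => simp
  | cons x xs ih =>
    obtain ⟨r, rs, hr⟩ := exists_cons_of_ne_nil (splitOnP_ne_nil q xs)
    obtain ⟨r', rs', hr'⟩ := exists_cons_of_ne_nil (splitOnP_ne_nil p r)
    rw [hr, flatMap_cons, hr'] at ih
    by_cases hq : q x
    · simp [splitOnP_cons_eq_if_modifyHead, hq, hqp x hq, hr, hr', ih]
    · by_cases hp : p x <;> simp [splitOnP_cons_eq_if_modifyHead, hq, hp, hr, hr', ← ih]

theorem Forall₂.splitOnP {β : Type*} {R : α → β → Prop} {p : α → Bool}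
    {p' : β → Bool} (hR : ∀ x y, R x y → p x = p' y) {s : List α} {s' : List β}
    (h : Forall₂ R s s') :
    Forall₂ (Forall₂ R) (s.splitOnP p) (s'.splitOnP p') := by
  induction h with
  | nil => simp
  | @cons x y xs ys hxy _ ih =>
    rw [splitOnP_cons_eq_if_modifyHead, splitOnP_cons_eq_if_modifyHead, hR x y hxy]
    split
    · exact .cons .nil ih
    · obtain ⟨r, rs, hr⟩ := exists_cons_of_ne_nil (splitOnP_ne_nil p xs)
      obtain ⟨r', rs', hr'⟩ := exists_cons_of_ne_nil (splitOnP_ne_nil p' ys)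
      rw [hr, hr'] at ih ⊢
      obtain ⟨hb, hbs⟩ := forall₂_cons.mp ih
      exact .cons (.cons hxy hb) hbs

theorem Forall₂.exists_mem_left {β : Type*} {R : α → β → Prop} {s : List α} {s' : List β}
    (h : Forall₂ R s s') {y : β} (hy : y ∈ s') : ∃ x ∈ s, R x y := by
  induction h with
  | nil => simp at hy
  | cons hxy _ ih =>
    rcases mem_cons.mp hy with rfl | hy
    · exact ⟨_, mem_cons_self, hxy⟩
    · obtain ⟨x, hx, hR⟩ := ih hy
      exact ⟨x, mem_cons_of_mem _ hx, hR⟩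

theorem Forall₂.exists_mem_right {β : Type*} {R : α → β → Prop} {s : List α}
    {s' : List β} (h : Forall₂ R s s') {x : α} (hx : x ∈ s) : ∃ y ∈ s', R x y :=
  (h.flip.exists_mem_left hx).imp fun _ ⟨hy, hR⟩ => ⟨hy, hR⟩

end List

theorem splitSep_eq_splitOn (v : ℕ) (s : List ℕ) : splitSep v s = s.splitOn v := by
  induction s with
  | nil => rfl
  | cons x xs ih =>
    obtain ⟨r, rs, hr⟩ := List.exists_cons_of_ne_nil (List.splitOn_ne_nil v xs)
    rw [List.splitOn_cons_eq_if_modifyHead, ← ih, splitSep, ih, hr]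
    by_cases hx : x = v <;> simp [hx]

theorem two_le_length_splitOn {v : ℕ} {s : List ℕ} (hv : v ∈ s) :
    2 ≤ (s.splitOn v).length := by
  by_contra! hlt
  obtain ⟨t, ht⟩ : ∃ t, s.splitOn v = [t] := by
    match h : s.splitOn v, List.splitOn_ne_nil v s with
    | [t], _ => exact ⟨t, rfl⟩
    | _ :: _ :: _, _ => simp [h] at hlt
  have hs : t = s := by simpa [ht] using List.intercalate_splitOn (xs := s) v
  have := List.mem_of_mem_splitOnP (ht ▸ List.mem_singleton_self t) (hs ▸ hv)
  simp at this

/-- The nonempty pieces of `s.splitOnP (· ≤ l)` are the maximal blocks of entries `> l`;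
each of them must contain `l + 1`. -/
def BlocksMarked (l : ℕ) (s : List ℕ) : Prop :=
  ∀ b ∈ s.splitOnP (fun x => decide (x ≤ l)), b ≠ [] → l + 1 ∈ b

theorem BlocksMarked.of_mem_splitOn {v l : ℕ} (hvl : v ≤ l) {s t : List ℕ}
    (hs : BlocksMarked l s) (ht : t ∈ s.splitOn v) : BlocksMarked l t := by
  intro b hb
  refine hs b ?_
  rw [← List.flatMap_splitOnP_of_imp (q := (· == v)) (fun x hx => by
    simp only [beq_iff_eq] at hx; simp [hx, hvl])]
  exact List.mem_flatMap.mpr ⟨t, ht, hb⟩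

theorem blocksMarked_iff_of_forall_lt {l : ℕ} {s : List ℕ} (hne : s ≠ [])
    (hlt : ∀ x ∈ s, l < x) : BlocksMarked l s ↔ l + 1 ∈ s := by
  rw [BlocksMarked, List.splitOnP_eq_singleton fun x hx => by simpa using hlt x hx]
  simp [hne]

theorem blocksMarked_append_cons {l y : ℕ} (hy : y ≤ l) (u w : List ℕ) :
    BlocksMarked l (u ++ y :: w) ↔ BlocksMarked l u ∧ BlocksMarked l w := by
  simp only [BlocksMarked, List.splitOnP_append_cons u w (p := fun x => decide (x ≤ l))
    (decide_eq_true hy), List.mem_append, or_imp, forall_and]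

theorem blocksMarked_of_forall_le {l : ℕ} {s : List ℕ} (h : ∀ x ∈ s, x ≤ l) :
    BlocksMarked l s := by
  intro b hb hne
  obtain ⟨x, hx⟩ := List.exists_mem_of_ne_nil b hne
  have := List.mem_of_mem_splitOnP hb hx
  simp [h x this.1] at this

theorem simplifiedList_iff_forall {L : List PTree} :
    SimplifiedList L ↔ ∀ c ∈ L, c.Simplified := by
  induction L with
  | nil => simp [SimplifiedList]
  | cons c cs ih => simp [SimplifiedList, ih]

theorem simplified_node {L : List PTree} (hL : 2 ≤ L.length) (h : ∀ c ∈ L, c.Simplified) :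
    (PTree.node L).Simplified := by
  match L, hL with
  | c :: c' :: cs, _ =>
    exact ⟨List.cons_ne_nil _ _, h c List.mem_cons_self,
      simplifiedList_iff_forall.mpr fun d hd => h d (List.mem_cons_of_mem _ hd)⟩

theorem forall_lt_and_blocksMarked_of_mem_splitSep {l : ℕ} {s t : List ℕ}
    (hlt : ∀ x ∈ s, l < x) (hs : ∀ l', l < l' → BlocksMarked l' s)
    (ht : t ∈ splitSep (l + 1) s) :
    (∀ x ∈ t, l + 1 < x) ∧ ∀ l', l + 1 ≤ l' → BlocksMarked l' t := by
  rw [splitSep_eq_splitOn] at ht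
  refine ⟨fun x hx => ?_, fun l' hl' => (hs l' hl').of_mem_splitOn hl' ht⟩
  obtain ⟨hxs, hxv⟩ := List.mem_of_mem_splitOnP ht hx
  have := hlt x hxs
  simp only [beq_eq_false_iff_ne] at hxv
  omega

theorem simplified_decodeT {s : List ℕ} {l : ℕ} (hlt : ∀ x ∈ s, l < x)
    (hs : ∀ l', l ≤ l' → BlocksMarked l' s) : (decodeT s l).Simplified := by
  fun_induction decodeT s l with
  | case1 => simp [PTree.Simplified]
  | case2 s l hleaf ih =>
    have hne : s ≠ [] := by tauto
    have hmem := (blocksMarked_iff_of_forall_lt hne hlt).mp (hs l le_rfl)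
    refine simplified_node ?_ ?_
    · simpa [splitSep_eq_splitOn] using two_le_length_splitOn hmem
    · simp only [List.mem_map, List.mem_attach, true_and, Subtype.exists]
      rintro _ ⟨t, ht, rfl⟩
      obtain ⟨htlt, hts⟩ :=
        forall_lt_and_blocksMarked_of_mem_splitSep hlt (fun l' hl' => hs l' hl'.le) ht
      exact ih ⟨t, ht⟩ htlt hts

theorem listMin_mem (x : ℕ) (xs : List ℕ) : listMin (x :: xs) ∈ x :: xs := by
  induction xs with
  | nil => simp [listMin]
  | cons y ys ih =>
    change min y (listMin (x :: ys)) ∈ x :: y :: ys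
    rcases min_choice y (listMin (x :: ys)) with h | h <;> rw [h]
    · simp
    · rcases List.mem_cons.mp ih with h' | h' <;> simp [h']

theorem forall₂_stepSimp (l : ℕ) (s : List ℕ) :
    List.Forall₂ (fun x y => y = x ∨ l < x ∧ y = l + 1) s (stepSimp l s) := by
  fun_induction stepSimp l s with
  | case1 => exact .nil
  | case2 x xs hx ih => exact .cons (.inl rfl) ih
  | case3 x xs hx ih =>
    conv_lhs => rw [← List.takeWhile_append_dropWhile (p := fun y => decide (l < y))
      (l := x :: xs)]
    refine List.rel_append ?_ ih
    rw [List.forall₂_map_right_iff, List.forall₂_same]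
    intro y hy
    split_ifs
    · exact .inr ⟨by simpa using List.mem_takeWhile_imp hy, rfl⟩
    · exact .inl rfl

theorem forall_mem_stepSimp_bounds {l M : ℕ} {s : List ℕ}
    (hs : ∀ x ∈ s, 1 ≤ x ∧ x ≤ M) :
    ∀ y ∈ stepSimp l s, 1 ≤ y ∧ y ≤ M := by
  intro y hy
  obtain ⟨x, hx, rfl | ⟨hlx, rfl⟩⟩ := (forall₂_stepSimp l s).exists_mem_left hy
  · exact hs y hx
  · have := hs x hx
    omega

theorem blocksMarked_stepSimp (l : ℕ) (s : List ℕ) : BlocksMarked l (stepSimp l s) := by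
  fun_induction stepSimp l s with
  | case1 => simp [BlocksMarked]
  | case2 x xs hx ih =>
    simpa using (blocksMarked_append_cons hx [] _).mpr ⟨by simp [BlocksMarked], ih⟩
  | case3 x xs hx ih =>
    set tw := (x :: xs).takeWhile (fun y => decide (l < y))
    have htw_ne : tw ≠ [] := by simp [tw, not_le.mp hx]
    have hB : BlocksMarked l (tw.map fun y => if y = listMin tw then l + 1 else y) := by
      refine (blocksMarked_iff_of_forall_lt (by simpa using htw_ne) ?_).mpr ?_
      · simp only [List.mem_map]
        rintro _ ⟨y, hy, rfl⟩
        have : l < y := by simpa using List.mem_takeWhile_imp hy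
        split_ifs <;> omega
      · obtain ⟨z, zs, hz⟩ := List.exists_cons_of_ne_nil htw_ne
        exact List.mem_map.mpr ⟨listMin tw, hz ▸ listMin_mem z zs, if_pos rfl⟩
    cases hdw : (x :: xs).dropWhile (fun y => decide (l < y)) with
    | nil => simpa [stepSimp] using hB
    | cons y ys =>
      have hy : y ≤ l := by
        simpa [hdw] using List.head?_dropWhile_not (fun y => decide (l < y)) (x :: xs)
      rw [hdw, stepSimp, if_pos hy] at ih
      rw [stepSimp, if_pos hy, blocksMarked_append_cons hy]
      exact ⟨hB, ((blocksMarked_append_cons hy [] _).mp ih).2⟩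

theorem BlocksMarked.stepSimp_of_lt {l l' : ℕ} (hl : l < l') {s : List ℕ}
    (hs : BlocksMarked l s) : BlocksMarked l (stepSimp l' s) := by
  have hp : ∀ x y, (y = x ∨ l' < x ∧ y = l' + 1) → decide (x ≤ l) = decide (y ≤ l) := by
    rintro x y (rfl | ⟨hx, rfl⟩)
    · rfl
    · simp only [decide_eq_decide]
      omega
  intro b' hb' hne'
  obtain ⟨b, hb, hbb'⟩ := ((forall₂_stepSimp l' s).splitOnP hp).exists_mem_left hb'
  have hne : b ≠ [] := by
    rintro rfl
    exact hne' (List.forall₂_nil_left_iff.mp hbb')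
  obtain ⟨y, hy, rfl | ⟨h, _⟩⟩ := hbb'.exists_mem_right (hs b hb hne)
  · exact hy
  · omega

theorem foldl_stepSimp_spec {M : ℕ} {a : List ℕ} (ha : ∀ x ∈ a, 1 ≤ x ∧ x ≤ M)
    (n : ℕ) :
    (∀ x ∈ (List.range n).foldl (fun b l => stepSimp (l + 1) b) a, 1 ≤ x ∧ x ≤ M) ∧
      ∀ l, 1 ≤ l → l ≤ n →
        BlocksMarked l ((List.range n).foldl (fun b l => stepSimp (l + 1) b) a) := by
  induction n with
  | zero => exact ⟨ha, fun l hl hl0 => by omega⟩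
  | succ n ih =>
    rw [List.range_succ, List.foldl_append, List.foldl_cons, List.foldl_nil]
    refine ⟨forall_mem_stepSimp_bounds ih.1, fun l hl hln => ?_⟩
    rcases Nat.lt_or_eq_of_le hln with hln | rfl
    · exact (ih.2 l hl (by omega)).stepSimp_of_lt hln
    · exact blocksMarked_stepSimp _ _

theorem simplify_spec {M : ℕ} {a : List ℕ} (ha : ∀ x ∈ a, 1 ≤ x ∧ x ≤ M) :
    (∀ x ∈ simplify M a, 1 ≤ x ∧ x ≤ M) ∧
      ∀ l, 1 ≤ l → BlocksMarked l (simplify M a) := by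
  obtain ⟨hbounds, hmarked⟩ := foldl_stepSimp_spec ha (M - 1)
  refine ⟨hbounds, fun l hl => ?_⟩
  by_cases hlM : l ≤ M - 1
  · exact hmarked l hl hlM
  · exact blocksMarked_of_forall_le fun x hx => by have := hbounds x hx; omega

/-- correctness of the simplification procedure. For every list `a`
of length `L ≥ 1` with entries in `{1,…,M}`, every internal (non-leaf) node of the
canonical decoded forest of the simplified list `simplify M a` has at least two
children: the simplification always produces an organization with no redundant
single-subordinate aggregator nodes. -/
theorem decode_simplify_simplified (M : ℕ) (a : List ℕ) (hlen : 1 ≤ a.length)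
    (ha : ∀ x ∈ a, 1 ≤ x ∧ x ≤ M) :
    forestSimplified (decode (simplify M a)) := by
  obtain ⟨hbounds, hmarked⟩ := simplify_spec ha
  rw [forestSimplified, decode, simplifiedList_iff_forall]
  simp only [List.mem_map]
  rintro _ ⟨t, ht, rfl⟩
  obtain ⟨htlt, hts⟩ :=
    forall_lt_and_blocksMarked_of_mem_splitSep (fun x hx => (hbounds x hx).1) hmarked ht
  exact simplified_decodeT htlt hts
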